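/- arXiv:2112.05671 — 2 statements merged into one kernel-verified Lean document; each statement's English description precedes it below -/
import Mathlib

section
/- Let X = (U, S) with S taking values in a finite set, and suppose P_{jt}(X) = P_j(S) · P_t(U | S) and P_{jt}(Y(0) | X) = P_t(Y(0) | X). Then E_{jt}[Y(0)] = Σ_s λ_t(s) γ_j(s), where λ_t(s) = E_t[Y(0) | S = s] = Σ_u E_t[Y(0) | U = u, S = s] P_t(U = u | S = s) depends only on t, and γ_j(s) = P_j(S = s) depends only on j. -/
theorem sum_prod_mul_marginal_mul_cond {R U S : Type*} [CommSemiring R] [Fintype U] [Fintype S]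
    (f : U × S → R) (marginal : S → R) (cond : S → U → R) :
    ∑ x : U × S, f x * (marginal x.2 * cond x.2 x.1)
      = ∑ s, (∑ u, f (u, s) * cond s u) * marginal s := by
  rw [Fintype.sum_prod_type, Finset.sum_comm]
  refine Finset.sum_congr rfl fun s _ => ?_
  rw [Finset.sum_mul]
  exact Finset.sum_congr rfl fun u _ => by ring

/-- A1 + A2: with causes X = (U,S), if the cause distribution factors as
P_j(S)·P_t(U|S) and the conditional outcome law given X is group-invariant, then the
expected control outcome has an exact linear factor model form Σ_s λ_t(s) γ_j(s),
with λ_t(s) = Σ_u E_t[Y(0)|U=u,S=s] P_t(U=u|S=s) depending only on t and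
γ_j(s) = P_j(S=s) depending only on j. -/
theorem stmt5 (J T U S YV : Type) [Fintype U] [Fintype S] [Fintype YV]
    (yval : YV → ℝ)
    (pX : J → T → U × S → ℝ)
    (pS : J → S → ℝ) (pU : T → S → U → ℝ)
    (cond : T → U × S → YV → ℝ)
    (hfactor : ∀ j t u s, pX j t (u, s) = pS j s * pU t s u) :
    ∀ j t, ∑ x : U × S, (∑ y, yval y * cond t x y) * pX j t x
      = ∑ s, (∑ u, (∑ y, yval y * cond t (u, s) y) * pU t s u) * pS j s := by
  intro j t
  have hpX : pX j t = fun x => pS j x.2 * pU t x.2 x.1 := funext fun x => hfactor j t x.1 x.2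
  rw [hpX]
  exact sum_prod_mul_marginal_mul_cond (fun x => ∑ y, yval y * cond t x y) (pS j) (pU t)
end

section
/- Let S be a finite set, P₁ in the span of {P_d}_{d∈D}, and let {P_d}_{d∈D'} ⊇ {P_d}_{d∈D} be a larger donor set defined over a strictly larger invariant set S' ⊇ S (i.e., each distribution extended to S' and the target's extension P₁' on S'). It is possible that P₁' is not in the span of the extended donor vectors {P'_d}_{d∈D'} even though P₁ ∈ span{P_d}_{d∈D}. -/
/-!
Over a single cell every probability vector is the constant `1`, so any nonempty donor set
reproduces the target. Refine that cell into three and add a donor concentrated on the new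
third cell: every donor then puts equal mass on the first two cells, i.e. lies in the kernel of
`x ↦ x 0 - x 1`, while the refined target `(1, 0, 0)` does not.
-/

open Finset

theorem Submodule.notMem_span_range_of_apply_eq_zero {R M ι : Type*} [Semiring R]
    [AddCommMonoid M] [Module R M] (f : M →ₗ[R] R) {v : ι → M} {x : M}
    (hv : ∀ i, f (v i) = 0) (hx : f x ≠ 0) : x ∉ span R (Set.range v) := fun hmem =>
  hx <| (span_le (p := LinearMap.ker f)).2 (Set.range_subset_iff.2 hv) hmem

theorem Finset.sum_filter_fiber_of_subsingleton {S S' M : Type*} [Fintype S'] [Subsingleton S]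
    [DecidableEq S] [AddCommMonoid M] (π : S' → S) (f : S' → M) (s : S) :
    ∑ s' ∈ univ.filter (fun s' => π s' = s), f s' = ∑ s', f s' := by
  rw [filter_true_of_mem fun s' _ => Subsingleton.elim (π s') s]

noncomputable section

def refinedDonors : Fin 2 → Fin 3 → ℝ := ![![1 / 2, 1 / 2, 0], ![0, 0, 1]]

def refinedTarget : Fin 3 → ℝ := ![1, 0, 0]

end

theorem refinedDonors_nonneg (d : Fin 2) (s : Fin 3) : 0 ≤ refinedDonors d s := by
  fin_cases d <;> fin_cases s <;> norm_num [refinedDonors]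

theorem sum_refinedDonors (d : Fin 2) : ∑ s, refinedDonors d s = 1 := by
  fin_cases d <;> norm_num [refinedDonors, Fin.sum_univ_succ]

theorem refinedTarget_nonneg (s : Fin 3) : 0 ≤ refinedTarget s := by
  fin_cases s <;> norm_num [refinedTarget]

theorem sum_refinedTarget : ∑ s, refinedTarget s = 1 := by
  norm_num [refinedTarget, Fin.sum_univ_succ]

theorem refinedTarget_notMem_span :
    refinedTarget ∉ Submodule.span ℝ (Set.range refinedDonors) := by
  refine Submodule.notMem_span_range_of_apply_eq_zero
    (LinearMap.proj (R := ℝ) (φ := fun _ : Fin 3 => ℝ) 0 - LinearMap.proj 1) (fun d => ?_) ?_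
  · fin_cases d <;> norm_num [refinedDonors]
  · norm_num [refinedTarget]

/-- enlarging the donor set can enlarge the minimal invariant set and
destroy the existence of synthetic controls. Concretely, there is an example with
|S| = 1 and |S'| = 3: a donor set D ⊆ D' with distributions over S whose span
contains the target, and refined distributions over S' (consistent with the
originals under the collapsing map S' → S) whose span does not contain the refined
target. -/
theorem stmt12 :
    ∃ (D D' : Type) (_ : Fintype D) (_ : Fintype D') (ι : D → D')
      (π : Fin 3 → Fin 1)
      (P : D → Fin 1 → ℝ) (P' : D' → Fin 3 → ℝ)
      (P1 : Fin 1 → ℝ) (P1' : Fin 3 → ℝ),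
      Function.Injective ι ∧
      (∀ d s, 0 ≤ P d s) ∧ (∀ d, ∑ s, P d s = 1) ∧
      (∀ d s, 0 ≤ P' d s) ∧ (∀ d, ∑ s, P' d s = 1) ∧
      (∀ s, 0 ≤ P1 s) ∧ (∑ s, P1 s = 1) ∧
      (∀ s, 0 ≤ P1' s) ∧ (∑ s, P1' s = 1) ∧
      (∀ d s, P d s = ∑ s' ∈ Finset.univ.filter (fun s' => π s' = s), P' (ι d) s') ∧
      (∀ s, P1 s = ∑ s' ∈ Finset.univ.filter (fun s' => π s' = s), P1' s') ∧
      P1 ∈ Submodule.span ℝ (Set.range P) ∧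
      P1' ∉ Submodule.span ℝ (Set.range P') := by
  refine ⟨Fin 1, Fin 2, inferInstance, inferInstance, Fin.castSucc, fun _ => 0,
    fun _ _ => 1, refinedDonors, 1, refinedTarget, Fin.castSucc_injective 1,
    fun _ _ => zero_le_one, fun _ => by simp, refinedDonors_nonneg, sum_refinedDonors,
    fun _ => zero_le_one, by simp, refinedTarget_nonneg, sum_refinedTarget,
    fun d s => ?_, fun s => ?_, Submodule.subset_span ⟨0, rfl⟩, refinedTarget_notMem_span⟩
  · exact ((sum_filter_fiber_of_subsingleton (fun _ => 0) _ s).trans (sum_refinedDonors _)).symm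
  · exact ((sum_filter_fiber_of_subsingleton (fun _ => 0) _ s).trans sum_refinedTarget).symm
end
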